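/- There exists a simple graph on 27 vertices that is 12-regular and triangle-distinct. -/

import Mathlib

/-- The triangle-degree of a vertex `v` of a simple graph `G`: the number of triangles
(3-cliques) of `G` that contain `v`. -/
noncomputable def triangleDegree {V : Type*} (G : SimpleGraph V) (v : V) : ℕ :=
  {s | s ∈ G.cliqueSet 3 ∧ v ∈ s}.ncard

/-- A simple graph is triangle-distinct if all its vertices have pairwise distinct
triangle-degrees. -/
def TriangleDistinct {V : Type*} (G : SimpleGraph V) : Prop :=
  Function.Injective (triangleDegree G)

/-- The triangle-degree equals the number of ordered pairs `(u, w)` with `u < w` such that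
`v u w` is a triangle. -/
lemma triangleDegree_eq_card {n : ℕ} (G : SimpleGraph (Fin n)) [DecidableRel G.Adj]
    (v : Fin n) :
    triangleDegree G v =
      (Finset.univ.filter fun p : Fin n × Fin n =>
        p.1 < p.2 ∧ G.Adj v p.1 ∧ G.Adj v p.2 ∧ G.Adj p.1 p.2).card := by
  classical
  set T := (Finset.univ.filter fun p : Fin n × Fin n =>
        p.1 < p.2 ∧ G.Adj v p.1 ∧ G.Adj v p.2 ∧ G.Adj p.1 p.2) with hT
  set g : Fin n × Fin n → Finset (Fin n) := fun p => ({v, p.1, p.2} : Finset (Fin n)) with hg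
  have himg : {s | s ∈ G.cliqueSet 3 ∧ v ∈ s} = g '' ↑T := by
    ext s
    simp only [Set.mem_setOf_eq, SimpleGraph.mem_cliqueSet_iff, Set.mem_image,
      Finset.mem_coe, hT, Finset.mem_filter, Finset.mem_univ, true_and, hg]
    constructor
    · rintro ⟨hclique, hv⟩
      have hcard : s.card = 3 := hclique.2
      have h2 : (s.erase v).card = 2 := by
        rw [Finset.card_erase_of_mem hv, hcard]
      obtain ⟨u, w, huw, hsw⟩ := Finset.card_eq_two.mp h2
      have hu : u ∈ s := (Finset.erase_subset _ _) (hsw ▸ Finset.mem_insert_self u {w})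
      have hw : w ∈ s := (Finset.erase_subset _ _)
        (hsw ▸ Finset.mem_insert_of_mem (Finset.mem_singleton_self w))
      have hvu : v ≠ u := fun h =>
        (Finset.ne_of_mem_erase (hsw ▸ Finset.mem_insert_self u {w})) h.symm
      have hvw : v ≠ w := fun h =>
        (Finset.ne_of_mem_erase
          (hsw ▸ Finset.mem_insert_of_mem (Finset.mem_singleton_self w))) h.symm
      have hadj_vu : G.Adj v u := hclique.1 hv hu hvu
      have hadj_vw : G.Adj v w := hclique.1 hv hw hvw
      have hadj_uw : G.Adj u w := hclique.1 hu hw huw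
      have hs : s = {v, u, w} := by
        rw [← Finset.insert_erase hv, hsw]
      rcases lt_or_gt_of_ne huw with hlt | hgt
      · exact ⟨(u, w), ⟨hlt, hadj_vu, hadj_vw, hadj_uw⟩, hs.symm⟩
      · refine ⟨(w, u), ⟨hgt, hadj_vw, hadj_vu, hadj_uw.symm⟩, ?_⟩
        rw [hs]; simp [Finset.pair_comm w u]
    · rintro ⟨⟨a, b⟩, ⟨hab, hva, hvb, hadj⟩, rfl⟩
      exact ⟨SimpleGraph.is3Clique_triple_iff.mpr ⟨hva, hvb, hadj⟩, by simp⟩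
  have hinj : Set.InjOn g ↑T := by
    rintro ⟨a, b⟩ ha ⟨c, d⟩ hc heq
    simp only [hT, Finset.mem_coe, Finset.mem_filter, Finset.mem_univ, true_and] at ha hc
    obtain ⟨hab, hva, hvb, _⟩ := ha
    obtain ⟨hcd, hvc, hvd, _⟩ := hc
    simp only [hg] at heq
    have hva' := G.ne_of_adj hva
    have hvc' := G.ne_of_adj hvc
    have hvd' := G.ne_of_adj hvd
    have hc_mem : c ∈ ({v, a, b} : Finset (Fin n)) := by rw [heq]; simp
    have hd_mem : d ∈ ({v, a, b} : Finset (Fin n)) := by rw [heq]; simp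
    have ha_mem : a ∈ ({v, c, d} : Finset (Fin n)) := by rw [← heq]; simp
    simp only [Finset.mem_insert, Finset.mem_singleton] at hc_mem hd_mem ha_mem
    have h1 : c = a ∨ c = b := hc_mem.resolve_left (fun h => hvc' h.symm)
    have h2 : d = a ∨ d = b := hd_mem.resolve_left (fun h => hvd' h.symm)
    have h3 : a = c ∨ a = d := ha_mem.resolve_left (fun h => hva' h.symm)
    have : a = c ∧ b = d := by
      rcases h1 with rfl | rfl
      · rcases h2 with rfl | rfl
        · exact absurd hcd (lt_irrefl _)
        · exact ⟨rfl, rfl⟩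
      · rcases h2 with rfl | rfl
        · exact absurd (hab.trans hcd) (lt_irrefl _)
        · rcases h3 with rfl | rfl
          · exact ⟨rfl, rfl⟩
          · exact absurd hab (lt_irrefl _)
    exact Prod.ext this.1 this.2
  rw [triangleDegree, himg, Set.ncard_image_of_injOn hinj, Set.ncard_coe_finset]

/-- Adjacency rows of our explicit graph, as bitmasks. -/
def tdRow : Fin 27 → ℕ :=
  ![118145642, 61087109, 73089626, 5427893, 61090220, 56803993, 19152773, 106447482,
    4013138, 35818733, 80556866, 72659794, 72166730, 85794128, 49447085, 63130153,
    128234756, 65061421, 76627282, 127939973, 94661004, 5981042, 19061932, 102745106,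
    6004851, 9159347, 10304645]

/-- An explicit 12-regular triangle-distinct graph on 27 vertices. -/
def tdGraph : SimpleGraph (Fin 27) where
  Adj i j := (tdRow i).testBit j.val = true
  symm := by
    constructor
    show ∀ i j, _ → _
    decide
  loopless := by
    constructor
    show ∀ i, ¬ _
    decide

instance tdGraph.adjDecidable : DecidableRel tdGraph.Adj :=
  fun _ _ => instDecidableEqBool _ _

theorem tdGraph_regular : tdGraph.IsRegularOfDegree 12 := by
  show ∀ v, _ = _
  decide

/-- The triangle-degrees of the 27 vertices of `tdGraph`. -/
def tVals : Fin 27 → ℕ :=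
  ![29, 16, 15, 33, 18, 41, 23, 21, 37, 28, 32, 27, 34, 39, 36, 35, 24, 38, 40, 20, 22,
    17, 26, 25, 19, 31, 30]

set_option maxRecDepth 10000 in
theorem tdGraph_count : ∀ v : Fin 27,
    (Finset.univ.filter fun p : Fin 27 × Fin 27 =>
        p.1 < p.2 ∧ tdGraph.Adj v p.1 ∧ tdGraph.Adj v p.2 ∧ tdGraph.Adj p.1 p.2).card
      = tVals v := by decide

theorem tVals_inj : Function.Injective tVals := by decide

theorem tdGraph_triangleDegree (v : Fin 27) : triangleDegree tdGraph v = tVals v := by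
  rw [triangleDegree_eq_card, tdGraph_count]

open scoped Classical in
/-- There exists a simple graph on 27 vertices that is 12-regular and triangle-distinct. -/
theorem exists_regular_triangle_distinct_27_12 :
    ∃ G : SimpleGraph (Fin 27), G.IsRegularOfDegree 12 ∧ TriangleDistinct G := by
  refine ⟨tdGraph, fun v => ?_, ?_⟩
  · have h := tdGraph_regular v
    convert h using 2
  intro a b hab
  rw [tdGraph_triangleDegree, tdGraph_triangleDegree] at hab
  exact tVals_inj hab
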